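/- Let a ≥ 5 and write a = 3A + a₀ with A a nonnegative integer and a₀ ∈ {0,1,2}. Then N_{K/ℚ}(α(v, 3A + a₀ − 2v − 2)) < N_{K/ℚ}(α(v+1, 3A + a₀ − 2(v+1) − 2)) for all integers v with 0 ≤ v ≤ A−2. -/

import Mathlib

open IntermediateField

noncomputable section

set_option maxHeartbeats 1000000 in
lemma norm_coords (a : ℤ) (ρ : ℝ)
    (hroot : ρ ^ 3 - (a : ℝ) * ρ ^ 2 - ((a : ℝ) + 3) * ρ - 1 = 0)
    (hdeg : Module.finrank ℚ ℚ⟮ρ⟯ = 3) (c0 c1 c2 : ℚ) :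
    Algebra.norm ℚ (algebraMap ℚ ℚ⟮ρ⟯ c0 + algebraMap ℚ ℚ⟮ρ⟯ c1 * AdjoinSimple.gen ℚ ρ
      + algebraMap ℚ ℚ⟮ρ⟯ c2 * AdjoinSimple.gen ℚ ρ ^ 2) =
      c2^3 - 3*c1*c2^2 + c1^3 + 9*c0*c2^2 - 3*c0*c1*c2 - 3*c0*c1^2 + 6*c0^2*c2 + c0^3
      + (a:ℚ) * (-(c1*c2^2) + c1^2*c2 + 4*c0*c2^2 - 3*c0*c1*c2 - c0*c1^2 + 2*c0^2*c2 + c0^2*c1)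
      + (a:ℚ)^2 * (c0*c2^2 - c0*c1*c2 + c0^2*c2) := by
  set g : ℚ⟮ρ⟯ := AdjoinSimple.gen ℚ ρ with hgdef
  have halg : ∀ r : ℚ, ((algebraMap ℚ ℚ⟮ρ⟯ r : ℚ⟮ρ⟯) : ℝ) = (r : ℝ) := fun r => rfl
  have hint : IsIntegral ℚ ρ := by
    refine ⟨Polynomial.X ^ 3 - Polynomial.C ((a:ℚ)) * Polynomial.X ^ 2
      - Polynomial.C (((a:ℚ)) + 3) * Polynomial.X - Polynomial.C 1, ?_, ?_⟩
    · monicity!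
    · simp only [Polynomial.eval₂_sub, Polynomial.eval₂_mul, Polynomial.eval₂_pow,
        Polynomial.eval₂_X, Polynomial.eval₂_C, Polynomial.eval₂_one]
      push_cast [map_intCast, map_ofNat, map_one, map_add]
      linear_combination hroot
  have hg3 : g ^ 3 = algebraMap ℚ ℚ⟮ρ⟯ (a : ℚ) * g ^ 2 + algebraMap ℚ ℚ⟮ρ⟯ (a : ℚ) * g
      + algebraMap ℚ ℚ⟮ρ⟯ 3 * g + 1 := by
    apply Subtype.coe_injective
    push_cast [hgdef, AdjoinSimple.coe_gen, halg]
    linear_combination hroot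
  rw [map_ofNat] at hg3
  set pb : PowerBasis ℚ ℚ⟮ρ⟯ := adjoin.powerBasis hint with hpb
  have hdim : pb.dim = 3 := by
    rw [hpb, adjoin.powerBasis_dim, ← adjoin.finrank hint, hdeg]
  set B : Module.Basis (Fin 3) ℚ ℚ⟮ρ⟯ := pb.basis.reindex (finCongr hdim) with hB
  have hBi : ∀ i : Fin 3, B i = g ^ (i : ℕ) := by
    intro i
    rw [hB, Module.Basis.reindex_apply, PowerBasis.basis_eq_pow]
    simp [hpb, hgdef, finCongr]
  have B0 : B 0 = 1 := by rw [hBi]; rfl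
  have B1 : B 1 = g := by rw [hBi]; exact pow_one g
  have B2 : B 2 = g ^ 2 := by rw [hBi]; norm_num
  set x : ℚ⟮ρ⟯ := algebraMap ℚ ℚ⟮ρ⟯ c0 + algebraMap ℚ ℚ⟮ρ⟯ c1 * g
      + algebraMap ℚ ℚ⟮ρ⟯ c2 * g ^ 2 with hx
  have hrepr : ∀ (d0 d1 d2 : ℚ) (i : Fin 3),
      B.repr (d0 • B 0 + d1 • B 1 + d2 • B 2) i = ![d0, d1, d2] i := by
    intro d0 d1 d2 i
    simp only [map_add, map_smul, Finsupp.coe_add, Pi.add_apply, Finsupp.coe_smul,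
      Pi.smul_apply, Module.Basis.repr_self, smul_eq_mul]
    fin_cases i <;> simp [Finsupp.single_apply]
  have hmul0 : x * B 0 = c0 • B 0 + c1 • B 1 + c2 • B 2 := by
    rw [B0, B1, B2, Algebra.smul_def, Algebra.smul_def, Algebra.smul_def, hx]
    ring
  have hmul1 : x * B 1 = c2 • B 0 + (c0 + 3*c2 + ((a:ℚ))*c2) • B 1 + (c1 + ((a:ℚ))*c2) • B 2 := by
    rw [B0, B1, B2, Algebra.smul_def, Algebra.smul_def, Algebra.smul_def, hx]
    simp only [map_add, map_mul, map_ofNat]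
    linear_combination (algebraMap ℚ ℚ⟮ρ⟯ c2) * hg3
  have hmul2 : x * B 2 = (c1 + ((a:ℚ))*c2) • B 0 + (3*c1 + c2 + 3*((a:ℚ))*c2 + ((a:ℚ))*c1 + ((a:ℚ))^2*c2) • B 1
      + (c0 + 3*c2 + ((a:ℚ))*c2 + ((a:ℚ))*c1 + ((a:ℚ))^2*c2) • B 2 := by
    rw [B0, B1, B2, Algebra.smul_def, Algebra.smul_def, Algebra.smul_def, hx]
    simp only [map_add, map_mul, map_ofNat, map_pow]
    linear_combination (algebraMap ℚ ℚ⟮ρ⟯ c1 + algebraMap ℚ ℚ⟮ρ⟯ ((a:ℚ)) * algebraMap ℚ ℚ⟮ρ⟯ c2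
      + algebraMap ℚ ℚ⟮ρ⟯ c2 * g) * hg3
  have hE0 : ∀ i, (Algebra.leftMulMatrix B x) i 0 = ![c0, c1, c2] i := by
    intro i; rw [Algebra.leftMulMatrix_eq_repr_mul, hmul0, hrepr]
  have hE1 : ∀ i, (Algebra.leftMulMatrix B x) i 1
      = ![c2, c0 + 3*c2 + ((a:ℚ))*c2, c1 + ((a:ℚ))*c2] i := by
    intro i; rw [Algebra.leftMulMatrix_eq_repr_mul, hmul1, hrepr]
  have hE2 : ∀ i, (Algebra.leftMulMatrix B x) i 2
      = ![c1 + ((a:ℚ))*c2, 3*c1 + c2 + 3*((a:ℚ))*c2 + ((a:ℚ))*c1 + ((a:ℚ))^2*c2,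
          c0 + 3*c2 + ((a:ℚ))*c2 + ((a:ℚ))*c1 + ((a:ℚ))^2*c2] i := by
    intro i; rw [Algebra.leftMulMatrix_eq_repr_mul, hmul2, hrepr]
  rw [Algebra.norm_eq_matrix_det B x, Matrix.det_fin_three, hE0 0, hE0 1, hE0 2,
    hE1 0, hE1 1, hE1 2, hE2 0, hE2 1, hE2 2]
  simp only [Matrix.cons_val_zero, Matrix.cons_val_one, Matrix.head_cons,
    Matrix.cons_val_two, Matrix.tail_cons]
  ring

/-- The element `α(v,W) = −v − (v(a+2) + 1 + W)ρ + (v+1)ρ²` of `ℚ(ρ) ⊆ ℝ`,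
where `ρ` is the (largest real) root of the simplest cubic polynomial. -/
def alphaS (a : ℤ) (ρ : ℝ) (v W : ℤ) : ℚ⟮ρ⟯ :=
  -((v : ℤ) : ℚ⟮ρ⟯) - ((v * (a + 2) + 1 + W : ℤ) : ℚ⟮ρ⟯) * AdjoinSimple.gen ℚ ρ
    + ((v + 1 : ℤ) : ℚ⟮ρ⟯) * AdjoinSimple.gen ℚ ρ ^ 2

lemma alphaS_eq (a : ℤ) (ρ : ℝ) (v W : ℤ) :
    alphaS a ρ v W = algebraMap ℚ ℚ⟮ρ⟯ (-(v : ℚ))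
      + algebraMap ℚ ℚ⟮ρ⟯ (-((v * (a + 2) + 1 + W : ℤ) : ℚ)) * AdjoinSimple.gen ℚ ρ
      + algebraMap ℚ ℚ⟮ρ⟯ (((v + 1 : ℤ) : ℚ)) * AdjoinSimple.gen ℚ ρ ^ 2 := by
  simp only [alphaS, map_neg, map_intCast]
  push_cast
  ring

lemma norm_alphaS (a : ℤ) (ρ : ℝ)
    (hroot : ρ ^ 3 - (a : ℝ) * ρ ^ 2 - ((a : ℝ) + 3) * ρ - 1 = 0)
    (hdeg : Module.finrank ℚ ℚ⟮ρ⟯ = 3) (v W : ℤ) :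
    Algebra.norm ℚ (alphaS a ρ v W) =
      (3 : ℚ) - 3*(W:ℚ)^2 - (W:ℚ)^3 - 3*(v:ℚ)*(W:ℚ) - 3*(v:ℚ)*(W:ℚ)^2 - 3*(v:ℚ)^2 + (v:ℚ)^3
      + 2*(a:ℚ) + 3*(a:ℚ)*(W:ℚ) + (a:ℚ)*(W:ℚ)^2 + 3*(a:ℚ)*(v:ℚ) + (a:ℚ)*(v:ℚ)*(W:ℚ)
      - (a:ℚ)*(v:ℚ)*(W:ℚ)^2 - 2*(a:ℚ)*(v:ℚ)^2 - (a:ℚ)*(v:ℚ)^2*(W:ℚ)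
      + (a:ℚ)^2*(v:ℚ) + (a:ℚ)^2*(v:ℚ)*(W:ℚ) := by
  rw [alphaS_eq, norm_coords a ρ hroot hdeg]
  push_cast
  ring

/-- Let `a ≥ 5`, `a = 3A + a₀` with `A ≥ 0`, `a₀ ∈ {0,1,2}`. Then
`N(α(v, 3A + a₀ − 2v − 2)) < N(α(v+1, 3A + a₀ − 2(v+1) − 2))` for all integers `v`
with `0 ≤ v ≤ A−2`. -/
theorem stmt_5 (a A a₀ : ℤ) (ha : 5 ≤ a) (hA : 0 ≤ A)
    (ha₀ : a₀ = 0 ∨ a₀ = 1 ∨ a₀ = 2) (haA : a = 3 * A + a₀)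
    (ρ : ℝ) (hroot : ρ ^ 3 - (a : ℝ) * ρ ^ 2 - ((a : ℝ) + 3) * ρ - 1 = 0)
    (hmax : ∀ x : ℝ, x ^ 3 - (a : ℝ) * x ^ 2 - ((a : ℝ) + 3) * x - 1 = 0 → x ≤ ρ)
    (hdeg : Module.finrank ℚ ℚ⟮ρ⟯ = 3)
    (v : ℤ) (hv0 : 0 ≤ v) (hv1 : v ≤ A - 2) :
    Algebra.norm ℚ (alphaS a ρ v (3 * A + a₀ - 2 * v - 2)) <
      Algebra.norm ℚ (alphaS a ρ (v + 1) (3 * A + a₀ - 2 * (v + 1) - 2)) := by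
  rw [norm_alphaS a ρ hroot hdeg, norm_alphaS a ρ hroot hdeg]
  rw [show (3*A + a₀ - 2*v - 2 : ℤ) = a - 2*v - 2 by omega,
    show (3*A + a₀ - 2*(v+1) - 2 : ℤ) = a - 2*(v+1) - 2 by omega]
  have h3 : 3 * (v + 1) ≤ a - 3 := by
    rcases ha₀ with h|h|h <;> omega
  have h3q : 3 * ((v:ℚ) + 1) ≤ (a:ℚ) - 3 := by exact_mod_cast h3
  have hvq : (0:ℚ) ≤ (v:ℚ) := by exact_mod_cast hv0
  have haq : (5:ℚ) ≤ (a:ℚ) := by exact_mod_cast ha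
  have h1 : (2*(a:ℚ)+3) * (3*((v:ℚ)+1)) ≤ (2*(a:ℚ)+3) * ((a:ℚ)-3) :=
    mul_le_mul_of_nonneg_left h3q (by linarith)
  have hE : (0:ℚ) < 2*(a:ℚ)^2 - (6*(a:ℚ)+9)*((v:ℚ)+1) := by nlinarith [h1]
  have hP : (0:ℚ) < ((v:ℚ)+2) * (2*(a:ℚ)^2 - (6*(a:ℚ)+9)*((v:ℚ)+1)) :=
    mul_pos (by linarith) hE
  push_cast
  nlinarith [hP]

end
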